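/- Let R be a commutative ring with derivation D, and define τ : R[X̄] → R[X̄,Ȳ] by τf = Σᵢ (∂f/∂Xᵢ)·Yᵢ + f^D. For any a ∈ Rⁿ and any f ∈ R[X̄], evaluating τf at (a, Da) (i.e., Xᵢ ↦ aᵢ, Yᵢ ↦ D(aᵢ)) gives D(f(a)). In particular, if f(a) = 0 then τf(a, Da) = 0. -/
import Mathlib

open MvPolynomial

noncomputable def coeffMap {R S : Type*} [CommRing R] [CommRing S] {σ : Type*}
    (D : R → S) (f : MvPolynomial σ R) : MvPolynomial σ S :=
  f.support.sum fun m => monomial m (D (coeff m f))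

noncomputable def tau {R : Type*} [CommRing R] {n : ℕ} (D : R → R)
    (f : MvPolynomial (Fin n) R) : MvPolynomial (Fin n ⊕ Fin n) R :=
  (∑ i, rename Sum.inl (pderiv i f) * X (Sum.inr i)) + rename Sum.inl (coeffMap D f)

section aux
variable {R S : Type*} [CommRing R] [CommRing S] {σ : Type*} (D : R → S)

lemma coeff_coeffMap (hD0 : D 0 = 0) (m : σ →₀ ℕ) (f : MvPolynomial σ R) :
    coeff m (coeffMap D f) = D (coeff m f) := by
  unfold coeffMap
  classical
  rw [coeff_sum]
  simp only [coeff_monomial]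
  rw [Finset.sum_ite_eq' f.support m (fun k => D (coeff k f))]
  split_ifs with h
  · rfl
  · rw [notMem_support_iff.mp h, hD0]

lemma coeffMap_add (hD0 : D 0 = 0) (hadd : ∀ x y : R, D (x + y) = D x + D y)
    (p q : MvPolynomial σ R) : coeffMap D (p + q) = coeffMap D p + coeffMap D q := by
  ext m
  simp [coeff_coeffMap D hD0, hadd]

lemma coeffMap_C (hD0 : D 0 = 0) (r : R) :
    coeffMap D (C r : MvPolynomial σ R) = C (D r) := by
  classical
  ext m
  simp only [coeff_coeffMap D hD0, coeff_C]
  split_ifs <;> simp [hD0]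

lemma coeffMap_mul_X [DecidableEq σ] (hD0 : D 0 = 0) (p : MvPolynomial σ R) (i : σ) :
    coeffMap D (p * X i) = coeffMap D p * X i := by
  ext m
  rw [coeff_coeffMap D hD0, coeff_mul_X', coeff_mul_X', coeff_coeffMap D hD0]
  split_ifs <;> simp [hD0]

end aux

lemma eval_tau {R : Type*} [CommRing R] {n : ℕ} (D : R → R) (f : MvPolynomial (Fin n) R)
    (a : Fin n → R) :
    eval (Sum.elim a (fun i => D (a i))) (tau D f) =
      (∑ j, eval a (pderiv j f) * D (a j)) + eval a (coeffMap D f) := by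
  simp [tau, eval_rename]

/-- Evaluating `τ f` at `(a, D a)` gives `D (f(a))`; in particular if `f(a) = 0`
then `τ f (a, D a) = 0`. -/
theorem stmt6 {R : Type*} [CommRing R] {n : ℕ}
    (D : R → R)
    (hadd : ∀ x y : R, D (x + y) = D x + D y)
    (hmul : ∀ x y : R, D (x * y) = D x * y + x * D y)
    (f : MvPolynomial (Fin n) R) (a : Fin n → R) :
    eval (Sum.elim a (fun i => D (a i))) (tau D f) = D (eval a f) ∧
    (eval a f = 0 → eval (Sum.elim a (fun i => D (a i))) (tau D f) = 0) := by
  have hD0 : D 0 = 0 := by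
    have h := hadd 0 0
    simp at h
    exact h
  have main : ∀ g : MvPolynomial (Fin n) R,
      eval (Sum.elim a (fun i => D (a i))) (tau D g) = D (eval a g) := by
    intro g
    induction g using MvPolynomial.induction_on with
    | C r =>
        rw [eval_tau]
        simp [coeffMap_C D hD0]
    | add p q hp hq =>
        rw [eval_tau] at hp hq ⊢
        rw [coeffMap_add D hD0 hadd]
        simp only [map_add, eval_add, hadd, add_mul]
        rw [Finset.sum_add_distrib, ← hp, ← hq]
        ring
    | mul_X p i hp =>
        rw [eval_tau] at hp ⊢
        rw [coeffMap_mul_X D hD0]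
        simp only [eval_mul, eval_X]
        rw [hmul, ← hp]
        simp only [pderiv_mul, pderiv_X, map_add, map_mul, eval_X, Pi.single_apply,
          apply_ite (eval a), map_one, map_zero, mul_ite, mul_one, mul_zero, add_mul,
          ite_mul, zero_mul, eval_add, eval_mul]
        rw [Finset.sum_add_distrib, Finset.sum_ite_eq Finset.univ i
          (fun x => eval a p * D (a x))]
        simp only [Finset.mem_univ, if_true]
        rw [Finset.sum_mul]
        rw [Finset.sum_congr rfl (fun j _ => by ring :
          ∀ j ∈ Finset.univ, eval a (pderiv j p) * a i * D (a j)
            = eval a (pderiv j p) * D (a j) * a i)]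
        ring
  exact ⟨main f, fun h => by rw [main f, h, hD0]⟩
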